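/- arXiv:1809.05326 — 3 statements merged into one kernel-verified Lean document; each statement's English description precedes it below -/
import Mathlib

section
/- Let (X,d) be a metric space, p ∈ X and c > 0; let B = B(p,c) be the open ball of center p and radius c, and assume its complement X ∖ B is nonempty. For y ∈ X set δ(y) = infDist(y, X ∖ B). Let g be a continuous nonnegative real-valued function on the closed ball B̄(p,c), and define f(y) = g(y)·δ(y) on B̄(p,c). Suppose f attains its maximum on B̄(p,c) at a point q, and that f(q) ≥ m for some m > 0. Then: (i) q ∈ B and g(q) > 0, and if moreover δ(q) ≤ c then g(q) ≥ m/c; (ii) every x ∈ X with d(q,x) < δ(q)/2 satisfies x ∈ B, δ(x) > δ(q)/2, and g(x) ≤ g(q)·δ(q)/δ(x) < 2·g(q). -/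
open Set Metric

/-- **Point-picking (blow-up) lemma.**
Let `(X,d)` be a metric space, `p ∈ X`, `c > 0`, `B = B(p,c)` the open ball with
nonempty complement, and `δ(y) = infDist(y, X ∖ B)`.  If `g ≥ 0` is continuous on the
closed ball, `f = g·δ` attains its maximum on the closed ball at `q`, and `f(q) ≥ m > 0`,
then:
(i) `q ∈ B`, `g(q) > 0`, and if `δ(q) ≤ c` then `g(q) ≥ m/c`;
(ii) every `x` with `d(q,x) < δ(q)/2` satisfies `x ∈ B`, `δ(x) > δ(q)/2`, and
`g(x) ≤ g(q)·δ(q)/δ(x) < 2·g(q)`. -/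
theorem point_picking_lemma
    {X : Type*} [MetricSpace X] (p : X) (c : ℝ) (hc : 0 < c)
    (hcompl : ((ball p c)ᶜ : Set X).Nonempty)
    (g : X → ℝ)
    (hgcont : ContinuousOn g (closedBall p c))
    (hgnonneg : ∀ y ∈ closedBall p c, 0 ≤ g y)
    (f : X → ℝ)
    (hf : ∀ y ∈ closedBall p c, f y = g y * infDist y (ball p c)ᶜ)
    (q : X) (hq : q ∈ closedBall p c)
    (hmax : ∀ y ∈ closedBall p c, f y ≤ f q)
    (m : ℝ) (hm : 0 < m) (hfq : m ≤ f q) :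
    (q ∈ ball p c ∧ 0 < g q ∧ (infDist q (ball p c)ᶜ ≤ c → m / c ≤ g q)) ∧
    (∀ x : X, dist q x < infDist q (ball p c)ᶜ / 2 →
      x ∈ ball p c ∧
      infDist q (ball p c)ᶜ / 2 < infDist x (ball p c)ᶜ ∧
      g x ≤ g q * infDist q (ball p c)ᶜ / infDist x (ball p c)ᶜ ∧
      g q * infDist q (ball p c)ᶜ / infDist x (ball p c)ᶜ < 2 * g q) := by
  have hfq' : g q * infDist q (ball p c)ᶜ = f q := (hf q hq).symm
  have hfqpos : 0 < g q * infDist q (ball p c)ᶜ := hfq' ▸ lt_of_lt_of_le hm hfq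
  have hδq : 0 < infDist q (ball p c)ᶜ := by
    by_contra h
    push_neg at h
    have : infDist q (ball p c)ᶜ = 0 := le_antisymm h infDist_nonneg
    rw [this, mul_zero] at hfqpos; exact lt_irrefl 0 hfqpos
  have hgq : 0 < g q := by
    by_contra h
    push_neg at h
    nlinarith [infDist_nonneg (x := q) (s := (ball p c)ᶜ)]
  have hqball : q ∈ ball p c := ball_infDist_compl_subset (mem_ball_self hδq)
  refine ⟨⟨hqball, hgq, fun hδc => ?_⟩, fun x hx => ?_⟩
  · rw [div_le_iff₀ hc]
    calc m ≤ f q := hfq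
      _ = g q * infDist q (ball p c)ᶜ := hf q hq
      _ ≤ g q * c := by nlinarith
  · have hδx : infDist q (ball p c)ᶜ / 2 < infDist x (ball p c)ᶜ := by
      have := infDist_le_infDist_add_dist (x := q) (y := x) (s := (ball p c)ᶜ)
      linarith
    have hδxpos : 0 < infDist x (ball p c)ᶜ := lt_of_le_of_lt (by linarith) hδx
    have hxball : x ∈ ball p c := ball_infDist_compl_subset (mem_ball_self hδxpos)
    have hxcb : x ∈ closedBall p c := ball_subset_closedBall hxball
    have hle : g x * infDist x (ball p c)ᶜ ≤ g q * infDist q (ball p c)ᶜ := by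
      rw [← hf x hxcb, ← hf q hq]; exact hmax x hxcb
    refine ⟨hxball, hδx, ?_, ?_⟩
    · rw [le_div_iff₀ hδxpos]; exact hle
    · rw [div_lt_iff₀ hδxpos]; nlinarith
end

section
/- Let Ω ⊂ ℝ² be a bounded open connected set and let u, v : Ω̄ → ℝ be continuous functions which are C² on Ω, satisfy the minimal surface equation on Ω, and agree on ∂Ω. Then u = v on all of Ω̄. In particular, a minimal vertical graph in ℝ³ over a bounded domain is uniquely determined by its boundary values. -/
open Set

noncomputable section

/-- The Euclidean plane. -/
abbrev E2 : Type := EuclideanSpace ℝ (Fin 2)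

/-- Partial derivative of `u : ℝ² → ℝ` in the `i`-th coordinate direction. -/
noncomputable def pd (i : Fin 2) (u : E2 → ℝ) (X : E2) : ℝ :=
  fderiv ℝ u X (EuclideanSpace.single i (1 : ℝ))

/-- The minimal surface operator:  `u` satisfies the minimal surface equation at `X`
iff `MSEop u X = 0`. -/
noncomputable def MSEop (u : E2 → ℝ) (X : E2) : ℝ :=
  (1 + (pd 1 u X) ^ 2) * pd 0 (pd 0 u) X
    - 2 * pd 0 u X * pd 1 u X * pd 1 (pd 0 u) X
    + (1 + (pd 0 u X) ^ 2) * pd 1 (pd 1 u) X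

/-!
Comparison principle. Suppose `u - v` is positive somewhere although `u ≤ v` on `∂Ω`. On the
compact set `K ⊆ Ω` where `u - v` is at least half its value at such a point, the derivatives of
`u` and `v` are bounded, so for `l` large and `ε` small the function
`g = u - v + ε exp (l x)` still attains an interior local maximum `Y ∈ K`. There `∇g = 0` and
`D²g ≤ 0`; pairing `D²g` with the (positive definite) coefficient matrix of the minimal surface
operator of `u` at `Y`, the equations for `u` and `v` cancel up to terms of order `ε l`, while the
exponential contributes order `ε l²`, a contradiction once `l` exceeds the bound on `K`.
-/

open Filter Topology Real

theorem IsLocalMax.deriv_deriv_nonpos {f : ℝ → ℝ} {x : ℝ} (h : IsLocalMax f x)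
    (hc : ContinuousAt f x) : deriv (deriv f) x ≤ 0 := by
  by_contra! hpos
  have hconst : f =ᶠ[𝓝 x] fun _ => f x := by
    filter_upwards [isLocalMin_of_deriv_deriv_pos hpos h.deriv_eq_zero hc, h] with y hmin hmax
    exact le_antisymm hmax hmin
  have h0 : deriv (deriv f) x = 0 := by simpa using hconst.deriv.deriv_eq
  exact hpos.ne' h0

section SecondDerivative

variable {E : Type*} [NormedAddCommGroup E] [NormedSpace ℝ E]

theorem IsLocalMax.fderiv_fderiv_apply_self_nonpos {g : E → ℝ} {y : E} (h : IsLocalMax g y)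
    (hg : ContDiffAt ℝ 2 g y) (ζ : E) : fderiv ℝ (fderiv ℝ g) y ζ ζ ≤ 0 := by
  set L : ℝ → E := fun t => y + t • ζ
  have hL : ∀ t, HasDerivAt L ζ t := fun t => by
    simpa [L] using ((hasDerivAt_id t).smul_const ζ).const_add y
  have hL0 : L 0 = y := by simp [L]
  have hLt : Tendsto L (𝓝 0) (𝓝 y) := hL0 ▸ (hL 0).continuousAt.tendsto
  have hderiv : deriv (g ∘ L) =ᶠ[𝓝 0] fun t => fderiv ℝ g (L t) ζ := by
    filter_upwards [hLt.eventually (hg.eventually (by simp))] with t ht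
    exact ((ht.differentiableAt two_ne_zero).hasFDerivAt.comp_hasDerivAt t (hL t)).deriv
  have hderiv2 : HasDerivAt (fun t => fderiv ℝ g (L t) ζ) (fderiv ℝ (fderiv ℝ g) y ζ ζ) 0 := by
    have hD : DifferentiableAt ℝ (fderiv ℝ g) (L 0) :=
      hL0 ▸ (hg.fderiv_right (m := 1) le_rfl).differentiableAt one_ne_zero
    simpa [hL0] using (hD.hasFDerivAt.comp_hasDerivAt 0 (hL 0)).clm_apply (hasDerivAt_const 0 ζ)
  have hmax : IsLocalMax (g ∘ L) 0 := (hL0 ▸ h).comp_continuous (hL 0).continuousAt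
  have hc : ContinuousAt (g ∘ L) 0 := (hL0 ▸ hg.continuousAt).comp (hL 0).continuousAt
  simpa [hderiv.deriv_eq, hderiv2.deriv] using hmax.deriv_deriv_nonpos hc

-- `(1 + b², -ab, 1 + a²)` is the matrix `I + ηηᵀ` with `η = (b, -a)`.
theorem ContinuousLinearMap.one_add_sq_pairing_nonpos {H : E →L[ℝ] E →L[ℝ] ℝ}
    (hsymm : ∀ x y, H x y = H y x) (hneg : ∀ z, H z z ≤ 0) (x y : E) (a b : ℝ) :
    (1 + b ^ 2) * H x x - 2 * a * b * H y x + (1 + a ^ 2) * H y y ≤ 0 := by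
  have hη := hneg (b • x - a • y)
  simp only [map_sub, map_smul, sub_apply, smul_apply, smul_eq_mul, hsymm x y] at hη
  linear_combination hneg x + hneg y + hη

end SecondDerivative

section FDerivFDeriv

variable {𝕜 : Type*} [NontriviallyNormedField 𝕜] {E : Type*} [NormedAddCommGroup E]
  [NormedSpace 𝕜 E] {F : Type*} [NormedAddCommGroup F] [NormedSpace 𝕜 F] {f g : E → F} {x : E}

theorem fderiv_fderiv_fun_add (hf : ContDiffAt 𝕜 2 f x) (hg : ContDiffAt 𝕜 2 g x) :
    fderiv 𝕜 (fderiv 𝕜 fun y => f y + g y) x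
      = fderiv 𝕜 (fderiv 𝕜 f) x + fderiv 𝕜 (fderiv 𝕜 g) x := by
  have h : (fderiv 𝕜 fun y => f y + g y) =ᶠ[𝓝 x] fun y => fderiv 𝕜 f y + fderiv 𝕜 g y := by
    filter_upwards [hf.eventually (by simp), hg.eventually (by simp)] with y hfy hgy
    exact fderiv_fun_add (hfy.differentiableAt two_ne_zero) (hgy.differentiableAt two_ne_zero)
  rw [h.fderiv_eq, fderiv_fun_add ((hf.fderiv_right (m := 1) le_rfl).differentiableAt one_ne_zero)
    ((hg.fderiv_right (m := 1) le_rfl).differentiableAt one_ne_zero)]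

theorem fderiv_fderiv_fun_sub (hf : ContDiffAt 𝕜 2 f x) (hg : ContDiffAt 𝕜 2 g x) :
    fderiv 𝕜 (fderiv 𝕜 fun y => f y - g y) x
      = fderiv 𝕜 (fderiv 𝕜 f) x - fderiv 𝕜 (fderiv 𝕜 g) x := by
  have h : (fderiv 𝕜 fun y => f y - g y) =ᶠ[𝓝 x] fun y => fderiv 𝕜 f y - fderiv 𝕜 g y := by
    filter_upwards [hf.eventually (by simp), hg.eventually (by simp)] with y hfy hgy
    exact fderiv_fun_sub (hfy.differentiableAt two_ne_zero) (hgy.differentiableAt two_ne_zero)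
  rw [h.fderiv_eq, fderiv_fun_sub ((hf.fderiv_right (m := 1) le_rfl).differentiableAt one_ne_zero)
    ((hg.fderiv_right (m := 1) le_rfl).differentiableAt one_ne_zero)]

end FDerivFDeriv

theorem IsCompact.exists_pos_forall_mul_lt {α : Type*} [TopologicalSpace α] {K : Set α}
    (hK : IsCompact K) {ψ : α → ℝ} (hψ : ContinuousOn ψ K) {M : ℝ} (hM : 0 < M) : ∃ ε > 0, ∀ x ∈ K, ε * ψ x < M := by
  obtain ⟨B, hB⟩ := hK.bddAbove_image hψ
  have hB1 : 0 < |B| + 1 := by positivity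
  refine ⟨M / (|B| + 1), by positivity, fun x hx => ?_⟩
  calc M / (|B| + 1) * ψ x ≤ M / (|B| + 1) * |B| := by
        gcongr
        exact (hB ⟨x, hx, rfl⟩).trans (le_abs_self B)
    _ < M / (|B| + 1) * (|B| + 1) := by gcongr; linarith
    _ = M := div_mul_cancel₀ M hB1.ne'

-- `K` is the superlevel set `{w ≥ w x₀ / 2}` in `closure Ω`; a perturbation below `w x₀ / 2`
-- cannot push the maximum over `K` out of the open set `{w > w x₀ / 2}`.
theorem exists_isLocalMax_add_of_frontier_nonpos {α : Type*} [PseudoMetricSpace α]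
    [ProperSpace α] {Ω : Set α} {w : α → ℝ} {x₀ : α}
    (hΩ : IsOpen Ω) (hbdd : Bornology.IsBounded Ω) (hw : ContinuousOn w (closure Ω))
    (hfr : ∀ x ∈ frontier Ω, w x ≤ 0) (hx₀ : x₀ ∈ closure Ω) (hpos : 0 < w x₀) :
    ∃ K ⊆ Ω, IsCompact K ∧ ∀ φ : α → ℝ, ContinuousOn φ K → 0 ≤ φ x₀ →
      (∀ x ∈ K, φ x < w x₀ / 2) → ∃ y ∈ K, IsLocalMax (fun x => w x + φ x) y := by
  set K := closure Ω ∩ w ⁻¹' Ici (w x₀ / 2)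
  set U := Ω ∩ w ⁻¹' Ioi (w x₀ / 2)
  have hKΩ : K ⊆ Ω := by
    rintro x ⟨hx, hwx⟩
    by_contra hxΩ
    have := hfr x ⟨hx, by rwa [hΩ.interior_eq]⟩
    simp only [mem_preimage, mem_Ici] at hwx
    linarith
  have hK : IsCompact K := hbdd.isCompact_closure.of_isClosed_subset
    (hw.preimage_isClosed_of_isClosed isClosed_closure isClosed_Ici) inter_subset_left
  have hUK : U ⊆ K := inter_subset_inter subset_closure (preimage_mono Ioi_subset_Ici_self)
  have hU : IsOpen U := (hw.mono subset_closure).isOpen_inter_preimage hΩ isOpen_Ioi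
  have hx₀U : x₀ ∈ U := ⟨hKΩ ⟨hx₀, by simp only [mem_preimage, mem_Ici]; linarith⟩,
    by simp only [mem_preimage, mem_Ioi]; linarith⟩
  refine ⟨K, hKΩ, hK, fun φ hφ hφx₀ hφK => ?_⟩
  have hKU : ∀ z ∈ K \ U, w z + φ z < w x₀ + φ x₀ := by
    rintro z ⟨hzK, hzU⟩
    have hwz : w z ≤ w x₀ / 2 := not_lt.1 fun h => hzU ⟨hKΩ hzK, h⟩
    linarith [hφK z hzK]
  obtain ⟨y, hyU, hy⟩ := hK.exists_isLocalMax_mem_open hUK ((hw.mono inter_subset_left).add hφ)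
    (hUK hx₀U) hKU hU
  exact ⟨y, hUK hyU, hy⟩

theorem ContDiffOn.pd {f : E2 → ℝ} {Ω : Set E2} {m n : WithTop ℕ∞} (hf : ContDiffOn ℝ n f Ω)
    (hΩ : IsOpen Ω) (hmn : m + 1 ≤ n) (i : Fin 2) : ContDiffOn ℝ m (pd i f) Ω :=
  (hf.fderiv_of_isOpen hΩ hmn).clm_apply contDiffOn_const

theorem pd_pd_eq_fderiv_fderiv {f : E2 → ℝ} {X : E2} (hf : ContDiffAt ℝ 2 f X) (i j : Fin 2) :
    pd i (pd j f) X
      = fderiv ℝ (fderiv ℝ f) X (EuclideanSpace.single i 1) (EuclideanSpace.single j 1) := by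
  change fderiv ℝ (fun Y => fderiv ℝ f Y (EuclideanSpace.single j 1)) X _ = _
  simp [fderiv_clm_apply ((hf.fderiv_right (m := 1) le_rfl).differentiableAt one_ne_zero)
    (differentiableAt_const _)]

theorem hasFDerivAt_const_mul_exp_mul_coord (c l : ℝ) (X : E2) :
    HasFDerivAt (fun X : E2 => c * exp (l * X 0))
      ((c * l * exp (l * X 0)) • (EuclideanSpace.proj 0 : E2 →L[ℝ] ℝ)) X := by
  refine (((EuclideanSpace.proj 0 : E2 →L[ℝ] ℝ).hasFDerivAt.const_mul l).exp.const_mul c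
    ).congr_fderiv ?_
  ext
  simp only [smul_apply, smul_eq_mul, EuclideanSpace.coe_proj]
  ring

theorem pd_zero_const_mul_exp_mul_coord (c l : ℝ) :
    pd 0 (fun X : E2 => c * exp (l * X 0)) = fun X => c * l * exp (l * X 0) := by
  ext X; simp [pd, (hasFDerivAt_const_mul_exp_mul_coord c l X).fderiv]

theorem pd_one_const_mul_exp_mul_coord (c l : ℝ) :
    pd 1 (fun X : E2 => c * exp (l * X 0)) = 0 := by
  ext X; simp [pd, (hasFDerivAt_const_mul_exp_mul_coord c l X).fderiv]

theorem pd_fun_zero (i : Fin 2) : pd i 0 = 0 := by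
  ext X; simp [pd]

-- The operators of `u` and `v` differ by `k (2 b v₁₀ - (a + c) v₁₁)` on `D²v`, since `d = b` and
-- `c = a + k`, while the perturbation contributes `(1 + b²) k l`.
theorem one_add_sq_mul_le_of_mse_perturbation {a b c d u00 u10 u11 v00 v10 v11 k l : ℝ}
    (hk : 0 < k) (hu : 0 ≤ (1 + b ^ 2) * u00 - 2 * a * b * u10 + (1 + a ^ 2) * u11)
    (hv : (1 + d ^ 2) * v00 - 2 * c * d * v10 + (1 + c ^ 2) * v11 ≤ 0)
    (hc : a - c + k = 0) (hd : b - d = 0)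
    (hmax : (1 + b ^ 2) * (u00 - v00 + k * l) - 2 * a * b * (u10 - v10)
      + (1 + a ^ 2) * (u11 - v11) ≤ 0) :
    (1 + b ^ 2) * l ≤ 2 * b * v10 - (a + c) * v11 := by
  rw [show d = b by linarith] at hv
  rw [show c = a + k by linarith] at hv ⊢
  have h : k * ((1 + b ^ 2) * l - (2 * b * v10 - (a + (a + k)) * v11)) ≤ 0 := by
    linear_combination hmax + hu + hv
  linarith [nonpos_of_mul_nonpos_right h hk]

theorem one_add_sq_mul_le_of_isLocalMax {u v : E2 → ℝ} {Y : E2} {ε l : ℝ}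
    (hu : ContDiffAt ℝ 2 u Y) (hv : ContDiffAt ℝ 2 v Y)
    (husub : 0 ≤ MSEop u Y) (hvsup : MSEop v Y ≤ 0) (hε : 0 < ε) (hl : 0 < l)
    (hmax : IsLocalMax (fun X => u X - v X + ε * exp (l * X 0)) Y) :
    (1 + pd 1 u Y ^ 2) * l
      ≤ 2 * pd 1 u Y * pd 1 (pd 0 v) Y - (pd 0 u Y + pd 0 v Y) * pd 1 (pd 1 v) Y := by
  have hφ : ContDiffAt ℝ 2 (fun X : E2 => ε * exp (l * X 0)) Y := by fun_prop
  have hw := hu.sub hv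
  have hgrad := hmax.fderiv_eq_zero
  rw [fderiv_fun_add (hw.differentiableAt two_ne_zero) (hφ.differentiableAt two_ne_zero),
    fderiv_fun_sub (hu.differentiableAt two_ne_zero) (hv.differentiableAt two_ne_zero)] at hgrad
  have hgrad0 : pd 0 u Y - pd 0 v Y + pd 0 (fun X : E2 => ε * exp (l * X 0)) Y = 0 :=
    congr($hgrad (EuclideanSpace.single 0 1))
  have hgrad1 : pd 1 u Y - pd 1 v Y + pd 1 (fun X : E2 => ε * exp (l * X 0)) Y = 0 :=
    congr($hgrad (EuclideanSpace.single 1 1))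
  have hhess := ContinuousLinearMap.one_add_sq_pairing_nonpos
    ((hw.add hφ).isSymmSndFDerivAt (by simp)) (hmax.fderiv_fderiv_apply_self_nonpos (hw.add hφ))
    (EuclideanSpace.single 0 1) (EuclideanSpace.single 1 1) (pd 0 u Y) (pd 1 u Y)
  rw [fderiv_fderiv_fun_add hw hφ, fderiv_fderiv_fun_sub hu hv] at hhess
  simp only [add_apply, sub_apply, ← pd_pd_eq_fderiv_fderiv hu, ← pd_pd_eq_fderiv_fderiv hv,
    ← pd_pd_eq_fderiv_fderiv hφ, pd_zero_const_mul_exp_mul_coord, pd_one_const_mul_exp_mul_coord,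
    pd_fun_zero, Pi.zero_apply, add_zero] at hhess hgrad0 hgrad1
  exact one_add_sq_mul_le_of_mse_perturbation (by positivity) husub hvsup hgrad0 hgrad1
    (by linear_combination hhess)

theorem le_on_closure_of_MSEop_nonneg_of_nonpos {Ω : Set E2} (hΩ : IsOpen Ω)
    (hbdd : Bornology.IsBounded Ω) {u v : E2 → ℝ}
    (hucont : ContinuousOn u (closure Ω)) (hvcont : ContinuousOn v (closure Ω))
    (huC2 : ContDiffOn ℝ 2 u Ω) (hvC2 : ContDiffOn ℝ 2 v Ω)
    (husub : ∀ X ∈ Ω, 0 ≤ MSEop u X) (hvsup : ∀ X ∈ Ω, MSEop v X ≤ 0)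
    (hfr : ∀ X ∈ frontier Ω, u X ≤ v X) : ∀ X ∈ closure Ω, u X ≤ v X := by
  by_contra! ⟨X₀, hX₀, hlt⟩
  obtain ⟨K, hKΩ, hK, hmax⟩ := exists_isLocalMax_add_of_frontier_nonpos hΩ hbdd
    (hucont.sub hvcont) (fun X hX => sub_nonpos.2 (hfr X hX)) hX₀ (sub_pos.2 hlt)
  have hF : ContinuousOn
      (fun X => 2 * pd 1 u X * pd 1 (pd 0 v) X - (pd 0 u X + pd 0 v X) * pd 1 (pd 1 v) X) K := by
    have hu1 (i : Fin 2) := (huC2.pd hΩ (m := 1) le_rfl i).continuousOn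
    have hv1 (i : Fin 2) := (hvC2.pd hΩ (m := 1) le_rfl i).continuousOn
    have hv2 (i j : Fin 2) := ((hvC2.pd hΩ (m := 1) le_rfl j).pd hΩ (m := 0) le_rfl i).continuousOn
    exact ((continuousOn_const.mul (hu1 1)).mul (hv2 1 0)
      |>.sub (((hu1 0).add (hv1 0)).mul (hv2 1 1))).mono hKΩ
  obtain ⟨C, hC⟩ := hK.bddAbove_image hF
  set l := max C 0 + 1
  obtain ⟨ε, hε, hεK⟩ := hK.exists_pos_forall_mul_lt (ψ := fun X => exp (l * X 0))
    (by fun_prop) (half_pos (sub_pos.2 hlt))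
  obtain ⟨Y, hYK, hY⟩ := hmax (fun X => ε * exp (l * X 0)) (by fun_prop) (by positivity) hεK
  have hYΩ := hKΩ hYK
  have hbound := one_add_sq_mul_le_of_isLocalMax (huC2.contDiffAt (hΩ.mem_nhds hYΩ))
    (hvC2.contDiffAt (hΩ.mem_nhds hYΩ)) (husub Y hYΩ) (hvsup Y hYΩ) hε (by positivity) hY
  have hCY := hC ⟨Y, hYK, rfl⟩
  have hl : l ≤ (1 + pd 1 u Y ^ 2) * l :=
    le_mul_of_one_le_left (by positivity) (le_add_of_nonneg_right (sq_nonneg _))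
  linarith [le_max_left C 0]

theorem minimal_graph_uniqueness_general
    (Ω : Set E2) (hΩopen : IsOpen Ω)
    (hΩbdd : Bornology.IsBounded Ω)
    (u v : E2 → ℝ)
    (hucont : ContinuousOn u (closure Ω)) (hvcont : ContinuousOn v (closure Ω))
    (huC2 : ContDiffOn ℝ 2 u Ω) (hvC2 : ContDiffOn ℝ 2 v Ω)
    (humin : ∀ X ∈ Ω, MSEop u X = 0) (hvmin : ∀ X ∈ Ω, MSEop v X = 0)
    (hbdry : EqOn u v (frontier Ω)) :
    EqOn u v (closure Ω) := fun X hX =>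
  le_antisymm
    (le_on_closure_of_MSEop_nonneg_of_nonpos hΩopen hΩbdd hucont hvcont huC2 hvC2
      (fun Y hY => (humin Y hY).ge) (fun Y hY => (hvmin Y hY).le) (fun _ hY => (hbdry hY).le) X hX)
    (le_on_closure_of_MSEop_nonneg_of_nonpos hΩopen hΩbdd hvcont hucont hvC2 huC2
      (fun Y hY => (hvmin Y hY).ge) (fun Y hY => (humin Y hY).le) (fun _ hY => (hbdry hY).ge) X hX)

/-- **Uniqueness of minimal graphs with given boundary values.**  Let `Ω ⊂ ℝ²` be a
bounded open connected set and let `u, v` be continuous on `Ω̄`, `C²` solutions of the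
minimal surface equation on `Ω`, with `u = v` on `∂Ω`.  Then `u = v` on all of `Ω̄`. -/
theorem minimal_graph_uniqueness
    (Ω : Set E2) (hΩopen : IsOpen Ω) (hΩconn : IsConnected Ω)
    (hΩbdd : Bornology.IsBounded Ω)
    (u v : E2 → ℝ)
    (hucont : ContinuousOn u (closure Ω)) (hvcont : ContinuousOn v (closure Ω))
    (huC2 : ContDiffOn ℝ 2 u Ω) (hvC2 : ContDiffOn ℝ 2 v Ω)
    (humin : ∀ X ∈ Ω, MSEop u X = 0) (hvmin : ∀ X ∈ Ω, MSEop v X = 0)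
    (hbdry : EqOn u v (frontier Ω)) :
    EqOn u v (closure Ω) :=
  minimal_graph_uniqueness_general Ω hΩopen hΩbdd u v hucont hvcont huC2 hvC2 humin hvmin hbdry

end
end

section
/- Let M ⊂ ℝ³ be a closed set which is locally a real-analytic minimal graph, i.e. for every p ∈ M there exist r > 0, an affine isometry R of ℝ³, an open set U ⊆ ℝ² and a real-analytic function v : U → ℝ satisfying the minimal surface equation, such that M ∩ B(p,r) = R({(X, v(X)) : X ∈ U}) ∩ B(p,r). If M contains a nondegenerate segment {(x,0,0) : x ∈ [a,b]} (with a < b) of the straight line D = {(x,0,0) : x ∈ ℝ}, then M contains the whole line D. -/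
open Set Metric

noncomputable section

/-- Euclidean 3-space. -/
abbrev E3 : Type := EuclideanSpace ℝ (Fin 3)

/-- The graph of `u` over `Ω`, as a subset of `ℝ³`. -/
def graph3 (u : E2 → ℝ) (Ω : Set E2) : Set E3 :=
  (fun X => (WithLp.toLp 2 ![X 0, X 1, u X] : E3)) '' Ω

/-- `M ⊆ ℝ³` is locally a real-analytic minimal graph:  near each of its points, up to an
affine isometry of `ℝ³`, it is the graph of a real-analytic solution of the minimal
surface equation. -/
def LocallyAnalyticMinimalGraph (M : Set E3) : Prop :=
  ∀ p ∈ M, ∃ r : ℝ, 0 < r ∧ ∃ R : E3 ≃ᵃⁱ[ℝ] E3, ∃ U : Set E2, ∃ v : E2 → ℝ,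
    IsOpen U ∧ AnalyticOnNhd ℝ v U ∧ (∀ X ∈ U, MSEop v X = 0) ∧
    M ∩ ball p r = (R '' graph3 v U) ∩ ball p r

/-!
Near each of its points `M` is the zero set of a real-analytic function: where `M` is the graph
of `v` over `U` after an isometry `R`, it is cut out by `y ↦ v(X) - z` with `R⁻¹ y = (X, z)`.
Let `S = {t | (t, 0, 0) ∈ M}`. A limit point `c` of the interior of `S` lies in `S` because `M`
is closed, and the analytic function `t ↦ Φ(t, 0, 0)` vanishes on a nonempty open subset of a
small interval around `c`, hence on that whole interval by the identity theorem. So the interior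
of `S` is clopen and nonempty, hence all of `ℝ`.
-/

open Filter Topology

theorem ContinuousAffineMap.analyticAt {𝕜 V W : Type*} [NontriviallyNormedField 𝕜]
    [NormedAddCommGroup V] [NormedSpace 𝕜 V] [NormedAddCommGroup W] [NormedSpace 𝕜 W]
    (f : V →ᴬ[𝕜] W) (x : V) : AnalyticAt 𝕜 f x := by
  rw [f.decomp]
  exact (f.contLinear.analyticAt x).add analyticAt_const

def IsLocallyAnalyticZeroSet {F : Type*} [NormedAddCommGroup F] [NormedSpace ℝ F]
    (M : Set F) : Prop :=
  ∀ p ∈ M, ∃ W ∈ 𝓝 p, ∃ Φ : F → ℝ, AnalyticOnNhd ℝ Φ W ∧ ∀ y ∈ W, y ∈ M ↔ Φ y = 0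

namespace IsLocallyAnalyticZeroSet

variable {E F : Type*} [NormedAddCommGroup E] [NormedSpace ℝ E] [NormedAddCommGroup F]
  [NormedSpace ℝ F] {M : Set F} {γ : E → F}

theorem closure_interior_preimage_subset (hM : IsLocallyAnalyticZeroSet M) (hMc : IsClosed M)
    (hγ : ∀ x, AnalyticAt ℝ γ x) :
    closure (interior (γ ⁻¹' M)) ⊆ interior (γ ⁻¹' M) := by
  intro c hc
  have hγc : Continuous γ := continuous_iff_continuousAt.2 fun x => (hγ x).continuousAt
  have hcM : γ c ∈ M := closure_minimal interior_subset (hMc.preimage hγc) hc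
  obtain ⟨W, hW, Φ, hΦ, hMW⟩ := hM _ hcM
  obtain ⟨δ, hδ, hball⟩ := Metric.mem_nhds_iff.1 (hγc.continuousAt.preimage_mem_nhds hW)
  obtain ⟨z, hzδ, hz⟩ := mem_closure_iff.1 hc _ isOpen_ball (mem_ball_self hδ)
  have hF : AnalyticOnNhd ℝ (Φ ∘ γ) (ball c δ) := fun t ht => (hΦ _ (hball ht)).comp (hγ t)
  have hFz : Φ ∘ γ =ᶠ[𝓝 z] 0 := by
    filter_upwards [isOpen_interior.mem_nhds hz, isOpen_ball.mem_nhds hzδ] with t ht htδ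
    exact (hMW _ (hball htδ)).1 (interior_subset (s := γ ⁻¹' M) ht)
  have hF0 : EqOn (Φ ∘ γ) 0 (ball c δ) :=
    hF.eqOn_zero_of_preconnected_of_eventuallyEq_zero (convex_ball c δ).isPreconnected hzδ hFz
  exact mem_interior.2
    ⟨ball c δ, fun t ht => (hMW _ (hball ht)).2 (hF0 ht), isOpen_ball, mem_ball_self hδ⟩

theorem mem_of_interior_preimage_nonempty (hM : IsLocallyAnalyticZeroSet M) (hMc : IsClosed M)
    (hγ : ∀ x, AnalyticAt ℝ γ x) (hne : (interior (γ ⁻¹' M)).Nonempty) (x : E) : γ x ∈ M := by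
  have hclopen : IsClopen (interior (γ ⁻¹' M)) :=
    ⟨isClosed_of_closure_subset (hM.closure_interior_preimage_subset hMc hγ), isOpen_interior⟩
  exact interior_subset (s := γ ⁻¹' M) ((hclopen.eq_univ hne).symm ▸ mem_univ x)

end IsLocallyAnalyticZeroSet

def projXY : E3 →L[ℝ] E2 :=
  (EuclideanSpace.equiv (Fin 2) ℝ).symm.toContinuousLinearMap ∘L
    ContinuousLinearMap.pi ![EuclideanSpace.proj 0, EuclideanSpace.proj 1]

@[simp]
theorem projXY_apply (y : E3) : projXY y = WithLp.toLp 2 ![y 0, y 1] := by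
  ext i
  fin_cases i <;> simp [projXY]

theorem mem_graph3_iff {v : E2 → ℝ} {U : Set E2} {y : E3} :
    y ∈ graph3 v U ↔ projXY y ∈ U ∧ v (projXY y) = y 2 := by
  constructor
  · rintro ⟨X, hX, rfl⟩
    have hX' : (WithLp.toLp 2 ![X 0, X 1] : E2) = X := by
      ext i
      fin_cases i <;> rfl
    simpa [hX'] using hX
  · rintro ⟨hU, hv⟩
    refine ⟨projXY y, hU, ?_⟩
    rw [projXY_apply] at hv ⊢
    ext i
    fin_cases i <;> simp [hv]

theorem LocallyAnalyticMinimalGraph.isLocallyAnalyticZeroSet {M : Set E3}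
    (hM : LocallyAnalyticMinimalGraph M) : IsLocallyAnalyticZeroSet M := by
  intro p hp
  obtain ⟨r, hr, R, U, v, hU, hv, -, hMB⟩ := hM p hp
  have hM_iff : ∀ y ∈ ball p r, y ∈ M ↔ R.symm y ∈ graph3 v U := by
    intro y hy
    constructor
    · intro hyM
      have hy' : y ∈ R '' graph3 v U ∩ ball p r := hMB ▸ ⟨hyM, hy⟩
      obtain ⟨⟨X, hX, rfl⟩, -⟩ := hy'
      simpa using hX
    · intro hyG
      have hy' : y ∈ M ∩ ball p r := hMB ▸ ⟨⟨_, hyG, by simp⟩, hy⟩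
      exact hy'.1
  set chart : E3 → E2 := fun y => projXY (R.symm y)
  have hchart : Continuous chart := projXY.continuous.comp R.symm.continuous
  have hpU : chart p ∈ U := (mem_graph3_iff.1 ((hM_iff p (mem_ball_self hr)).1 hp)).1
  refine ⟨ball p r ∩ chart ⁻¹' U,
    inter_mem (ball_mem_nhds p hr) (hchart.continuousAt.preimage_mem_nhds (hU.mem_nhds hpU)),
    fun y => v (chart y) - R.symm y 2, fun y hy => ?_, fun y hy => ?_⟩
  · have hR := R.symm.toAffineIsometry.toContinuousAffineMap.analyticAt y
    have hz : AnalyticAt ℝ (fun y => R.symm y 2) y :=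
      ((EuclideanSpace.proj (2 : Fin 3) : E3 →L[ℝ] ℝ).analyticAt _).comp hR
    exact ((hv _ hy.2).comp ((projXY.analyticAt _).comp hR)).sub hz
  · rw [hM_iff y hy.1, mem_graph3_iff, sub_eq_zero]
    exact and_iff_right hy.2

/-- **A complete minimal surface containing a segment of a line contains the whole
line.**  Let `M ⊂ ℝ³` be a closed set which is locally a real-analytic minimal graph.
If `M` contains the segment `{(x,0,0) : x ∈ [a,b]}` with `a < b`, then `M` contains the
whole line `D = {(x,0,0) : x ∈ ℝ}`. -/
theorem line_continuation_in_minimal_surface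
    (M : Set E3) (hMclosed : IsClosed M)
    (hMloc : LocallyAnalyticMinimalGraph M)
    (a b : ℝ) (hab : a < b)
    (hseg : ∀ x ∈ Icc a b, (WithLp.toLp 2 ![x, 0, 0] : E3) ∈ M) :
    ∀ x : ℝ, (WithLp.toLp 2 ![x, 0, 0] : E3) ∈ M := by
  set γ : ℝ → E3 := fun x => WithLp.toLp 2 ![x, 0, 0]
  have hγ_smul : γ = fun x => x • (WithLp.toLp 2 ![1, 0, 0] : E3) := by
    funext x
    ext i
    fin_cases i <;> simp [γ]
  have hγ : ∀ x, AnalyticAt ℝ γ x := fun x => hγ_smul ▸ analyticAt_id.smul analyticAt_const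
  have hne : (interior (γ ⁻¹' M)).Nonempty :=
    ⟨(a + b) / 2, interior_maximal (fun x hx => hseg x (Ioo_subset_Icc_self hx)) isOpen_Ioo
      ⟨by linarith, by linarith⟩⟩
  exact hMloc.isLocallyAnalyticZeroSet.mem_of_interior_preimage_nonempty hMclosed hγ hne
end
end
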